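/- The number of distinct right conjugates of a standard morphism ψ on 𝒜 = {a,b} is |ψ(ab)| − 1; namely, the right conjugates ψ₀, ψ₁, …, ψ_{|ψ(ab)|−2} all exist and are pairwise distinct, and every right conjugate of ψ equals one of them. -/

import Mathlib

/-- The two-letter alphabet 𝒜 = {a, b}. -/
inductive AB : Type
  | a : AB
  | b : AB
deriving DecidableEq, Repr

/-- Apply a morphism (determined by its images on the letters) to a finite word. -/
def applyM (g : AB → List AB) (w : List AB) : List AB := w.flatMap g

/-- The exchange morphism E : a ↦ b, b ↦ a. -/
def Em : AB → List AB
  | AB.a => [AB.b]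
  | AB.b => [AB.a]

/-- The morphism φ : a ↦ ab, b ↦ a. -/
def phim : AB → List AB
  | AB.a => [AB.a, AB.b]
  | AB.b => [AB.a]

/-- Composition of morphisms: `compM g h` applies `h` first, then `g`. -/
def compM (g h : AB → List AB) : AB → List AB := fun c => applyM g (h c)

/-- Powers of a morphism. -/
def mpow (g : AB → List AB) : ℕ → AB → List AB
  | 0 => fun c => [c]
  | n + 1 => compM g (mpow g n)

/-- A morphism is standard iff it is a composition of E and φ (in any number and order). -/
inductive IsStandard : (AB → List AB) → Prop
  | id : IsStandard (fun c => [c])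
  | compE {ψ : AB → List AB} : IsStandard ψ → IsStandard (compM ψ Em)
  | compPhi {ψ : AB → List AB} : IsStandard ψ → IsStandard (compM ψ phim)

/-- `IsRightConj ψ ξ k` : ξ is the k-th right conjugate of ψ, i.e. there is a word u
of length k with ψ(w)u = uξ(w) for all finite words w. -/
def IsRightConj (ψ ξ : AB → List AB) (k : ℕ) : Prop :=
  ∃ u : List AB, u.length = k ∧ ∀ w : List AB, applyM ψ w ++ u = u ++ applyM ξ w

/-- w^k (power of a finite word under concatenation). -/
def lpow (w : List AB) : ℕ → List AB
  | 0 => []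
  | k + 1 => w ++ lpow w k

/-- Standard sequence associated with a directive sequence (d₁, d₂, …) (here `d`
is indexed so that `d i` is dᵢ for i ≥ 1): `sseq d 0 = s₋₁ = b`, `sseq d (n+1) = sₙ`,
with s₀ = a and sₙ = sₙ₋₁^{dₙ} sₙ₋₂. -/
def sseq (d : ℕ → ℕ) : ℕ → List AB
  | 0 => [AB.b]
  | 1 => [AB.a]
  | n + 2 => lpow (sseq d (n + 1)) (d (n + 1)) ++ sseq d n

/-- Convergent denominators: `qseq d n` = qₙ = |sₙ| (q₀ = 1, q₁ = 1 + d₁,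
qₙ = dₙqₙ₋₁ + qₙ₋₂). -/
def qseq (d : ℕ → ℕ) : ℕ → ℕ
  | 0 => 1
  | 1 => 1 + d 1
  | n + 2 => d (n + 2) * qseq d (n + 1) + qseq d n

/-- `PrefInf u x` : the finite word u is a prefix of the infinite word x. -/
def PrefInf (u : List AB) (x : ℕ → AB) : Prop :=
  ∀ i, i < u.length → u.getD i AB.a = x i

/-- Image of an infinite word under a (non-erasing) morphism, letter by letter. -/
def applyInf (g : AB → List AB) (x : ℕ → AB) : ℕ → AB :=
  fun i => (applyM g ((List.range (i + 1)).map x)).getD i AB.a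

/-- `IsProdInf u x` : the infinite word x is the infinite product u 0 · u 1 · u 2 ⋯,
i.e. every finite partial product is a prefix of x. -/
def IsProdInf (u : ℕ → List AB) (x : ℕ → AB) : Prop :=
  ∀ n, PrefInf (((List.range n).map u).flatten) x

/-- Adjoining singular words: `vword d k` is the adjoining singular word v_{k-1}
(so `vword d 0 = v₋₁`), where vₙ = a·sₙ₊₁^{d_{n+2}−1}sₙ·b⁻¹ for n odd and
vₙ = b·sₙ₊₁^{d_{n+2}−1}sₙ·a⁻¹ for n even. -/
def vword (d : ℕ → ℕ) (k : ℕ) : List AB :=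
  (if k % 2 = 0 then AB.a else AB.b) ::
    (lpow (sseq d (k + 1)) (d (k + 1) - 1) ++ sseq d k).dropLast

/-- Singular words: `wword d k` is the singular word w_{k-2}
(w₋₂ = ε, w₋₁ = a, w₀ = b, and wₙ = a·sₙ·b⁻¹ for n ≥ 1 odd, wₙ = b·sₙ·a⁻¹ for n even). -/
def wword (d : ℕ → ℕ) : ℕ → List AB
  | 0 => []
  | 1 => [AB.a]
  | 2 => [AB.b]
  | k + 3 =>
      (if (k + 1) % 2 = 1 then AB.a else AB.b) :: (sseq d (k + 2)).dropLast

/-- The standard morphism σ associated with a type (i) Sturm number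
α = [0;1+d₁,\overline{d₂,…,dₙ}] : σ(a) = sₙ₋₁, σ(b) = sₙ₋₁^{dₙ−d₁} sₙ₋₂. -/
def sigmaGen (d : ℕ → ℕ) (n : ℕ) : AB → List AB
  | AB.a => sseq d n
  | AB.b => lpow (sseq d n) (d n - d 1) ++ sseq d (n - 1)

/-- The directive sequence of α = [0;2,\overline{r}] : d₁ = 1, dᵢ = r for i ≥ 2. -/
def dseq (r : ℕ) : ℕ → ℕ := fun i => if i ≤ 1 then 1 else r

/-- The directive sequence of 1 − α = [0;1,d₁,\overline{d₂,…,dₙ}] obtained from that of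
α = [0;1+d₁,\overline{d₂,…,dₙ}] : ê₁ = 0 and êᵢ = dᵢ₋₁ for i ≥ 2. -/
def dhat (d : ℕ → ℕ) : ℕ → ℕ := fun i => if i ≤ 1 then 0 else d (i - 1)

/-- `Generates ψ c x` : ψ is prolongable on the letter c and x = ψ^ω(c), i.e. every
ψ^m(c) is a prefix of x. -/
def Generates (ψ : AB → List AB) (c : AB) (x : ℕ → AB) : Prop :=
  (∃ w : List AB, w ≠ [] ∧ ψ c = c :: w) ∧ ∀ m, PrefInf (mpow ψ m c) x

/-- Fibonacci numbers, shifted: `fibw k = F_{k-1}`, so fibw 0 = F₋₁ = 1,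
fibw 1 = F₀ = 1, Fₙ = Fₙ₋₁ + Fₙ₋₂. -/
def fibw : ℕ → ℕ
  | 0 => 1
  | 1 => 1
  | n + 2 => fibw (n + 1) + fibw n

/-- `HasCF γ a` : γ has continued fraction expansion [0; a 1, a 2, a 3, …]. -/
def HasCF (γ : ℝ) (a : ℕ → ℕ) : Prop :=
  ∃ x : ℕ → ℝ, x 0 = γ ∧ (∀ i, 0 < x i ∧ x i < 1) ∧
    ∀ i, 1 / x i = (a (i + 1) : ℝ) + x (i + 1)

/-- γ has a continued fraction expansion of type (i):
γ = [0;1+d₁,\overline{d₂,…,dₙ}] < 1/2 with dₙ ≥ d₁ ≥ 1. -/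
def CFTypeI (γ : ℝ) : Prop :=
  ∃ a : ℕ → ℕ, HasCF γ a ∧ γ < 1 / 2 ∧
    ∃ n : ℕ, 2 ≤ n ∧ ∃ d : ℕ → ℕ,
      (∀ i, 1 ≤ i → 1 ≤ d i) ∧ a 1 = 1 + d 1 ∧ (∀ i, 2 ≤ i → a i = d i) ∧
      (∀ i, 2 ≤ i → d (i + (n - 1)) = d i) ∧ d 1 ≤ d n

/-- γ has a continued fraction expansion of type (ii):
γ = [0;1,d₁,\overline{d₂,…,dₙ}] > 1/2 with dₙ ≥ d₁. -/
def CFTypeII (γ : ℝ) : Prop :=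
  ∃ a : ℕ → ℕ, HasCF γ a ∧ 1 / 2 < γ ∧
    ∃ n : ℕ, 2 ≤ n ∧ ∃ d : ℕ → ℕ,
      (∀ i, 1 ≤ i → 1 ≤ d i) ∧ a 1 = 1 ∧ (∀ i, 2 ≤ i → a i = d (i - 1)) ∧
      (∀ i, 2 ≤ i → d (i + (n - 1)) = d i) ∧ d 1 ≤ d n

/-- A Sturm number: an irrational γ ∈ (0,1) whose continued fraction expansion is of
type (i) or type (ii). -/
def IsSturmNumber (γ : ℝ) : Prop :=
  Irrational γ ∧ 0 < γ ∧ γ < 1 ∧ (CFTypeI γ ∨ CFTypeII γ)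


/-! A standard morphism ψ factors as ψ(ab) = z x y, ψ(ba) = z y x with letters x ≠ y, where z is
a prefix of ψ(c) z for both letters c (this invariant is preserved by composing with E and φ).
Every prefix of z therefore conjugates ψ, giving right conjugates of lengths 0, …, |z|. A
conjugating word u is a prefix of ψ(ab) u = z x y u and of ψ(ba) u = z y x u, so |u| ≤ |z|.
Conjugating words are prefixes of the powers of ψ(a), so conjugates of equal length coincide;
if one ξ arose from words u and u t with t ≠ ε, then t would commute with ξ(ab) and ξ(ba),
forcing ξ(ab) = ξ(ba) and hence ψ(ab) = ψ(ba). -/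

namespace List

variable {α : Type*}

theorem take_prefix_append_take {l z : List α} (h : z <+: l ++ z) (k : ℕ) :
    z.take k <+: l ++ z.take k := by
  rw [← take_length_add_append k]
  exact prefix_take_iff.mpr ⟨(take_prefix k z).trans h, by grind⟩

theorem append_flatten_replicate_comm {X t : List α} (h : X ++ t = t ++ X) (n : ℕ) :
    X ++ (replicate n t).flatten = (replicate n t).flatten ++ X := by
  induction n with
  | zero => simp
  | succ n ih =>
    rw [replicate_succ, flatten_cons, ← append_assoc, h, append_assoc, ih, append_assoc]

theorem eq_take_flatten_replicate_of_append_comm {X t : List α} (h : X ++ t = t ++ X)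
    (ht : t ≠ []) : X = ((replicate X.length t).flatten).take X.length := by
  have hlen : X.length ≤ ((replicate X.length t).flatten).length := by
    simpa using Nat.le_mul_of_pos_right _ (length_pos_iff.mpr ht)
  have hX : X <+: (replicate X.length t).flatten ++ X := ⟨_, append_flatten_replicate_comm h _⟩
  exact (prefix_iff_eq_take.mp hX).trans (take_append_of_le_length hlen)

theorem eq_of_append_comm_of_length_eq {X Y t : List α} (hX : X ++ t = t ++ X)
    (hY : Y ++ t = t ++ Y) (ht : t ≠ []) (hlen : X.length = Y.length) : X = Y := by
  rw [eq_take_flatten_replicate_of_append_comm hX ht,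
    eq_take_flatten_replicate_of_append_comm hY ht, hlen]

end List

open List

theorem applyM_cons (g : AB → List AB) (c : AB) (w : List AB) :
    applyM g (c :: w) = g c ++ applyM g w := by
  simp [applyM]

theorem applyM_pair (g : AB → List AB) (c d : AB) : applyM g [c, d] = g c ++ g d := by
  simp [applyM]

theorem length_applyM_replicate (g : AB → List AB) (c : AB) (n : ℕ) :
    (applyM g (replicate n c)).length = n * (g c).length := by
  simp [applyM]

theorem ne_nil_of_applyM_ab_ne_applyM_ba {ψ : AB → List AB}
    (hne : applyM ψ [AB.a, AB.b] ≠ applyM ψ [AB.b, AB.a]) : ψ AB.a ≠ [] := by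
  intro ha
  simp [applyM_pair, ha] at hne

/-- The morphism c ↦ u⁻¹ ψ(c) u (meaningful when u is a prefix of ψ(c) u). -/
def rightConj (ψ : AB → List AB) (u : List AB) : AB → List AB :=
  fun c => (ψ c ++ u).drop u.length

theorem applyM_append_of_letters {ψ ξ : AB → List AB} {u : List AB}
    (h : ∀ c, ψ c ++ u = u ++ ξ c) (w : List AB) : applyM ψ w ++ u = u ++ applyM ξ w := by
  induction w with
  | nil => simp [applyM]
  | cons c w ih =>
    rw [applyM_cons, applyM_cons, append_assoc, ih, ← append_assoc, h, append_assoc]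

theorem isRightConj_rightConj {ψ : AB → List AB} {u : List AB} (h : ∀ c, u <+: ψ c ++ u) :
    IsRightConj ψ (rightConj ψ u) u.length := by
  refine ⟨u, rfl, applyM_append_of_letters fun c => ?_⟩
  obtain ⟨v, hv⟩ := h c
  simp [rightConj, ← hv]

section Conjugators

variable {ψ ξ ξ' : AB → List AB} {u u' : List AB}

theorem prefix_applyM_replicate_of_conj (hu : ∀ w, applyM ψ w ++ u = u ++ applyM ξ w)
    {c : AB} (hc : ψ c ≠ []) {n : ℕ} (hn : u.length ≤ n) : u <+: applyM ψ (replicate n c) := by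
  have hlen : u.length ≤ (applyM ψ (replicate n c)).length := by
    rw [length_applyM_replicate]
    exact hn.trans (Nat.le_mul_of_pos_right _ (length_pos_iff.mpr hc))
  exact prefix_of_prefix_length_le ⟨_, (hu _).symm⟩ (prefix_append _ _) hlen

theorem prefix_of_conj_of_length_le (hu : ∀ w, applyM ψ w ++ u = u ++ applyM ξ w)
    (hu' : ∀ w, applyM ψ w ++ u' = u' ++ applyM ξ' w) {c : AB} (hc : ψ c ≠ [])
    (hle : u.length ≤ u'.length) : u <+: u' :=
  prefix_of_prefix_length_le (prefix_applyM_replicate_of_conj hu hc hle)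
    (prefix_applyM_replicate_of_conj hu' hc le_rfl) hle

end Conjugators

namespace IsRightConj

variable {ψ ξ ξ' : AB → List AB} {k k' : ℕ}

theorem unique {c : AB} (hc : ψ c ≠ []) (h : IsRightConj ψ ξ k) (h' : IsRightConj ψ ξ' k) :
    ξ = ξ' := by
  obtain ⟨u, rfl, hu⟩ := h
  obtain ⟨u', hlen, hu'⟩ := h'
  obtain rfl : u = u' := (prefix_of_conj_of_length_le hu hu' hc hlen.ge).eq_of_length hlen.symm
  funext d
  simpa [applyM] using append_cancel_left ((hu [d]).symm.trans (hu' [d]))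

theorem eq_of_le (hne : applyM ψ [AB.a, AB.b] ≠ applyM ψ [AB.b, AB.a])
    (h : IsRightConj ψ ξ k) (h' : IsRightConj ψ ξ k') (hle : k ≤ k') : k = k' := by
  obtain ⟨u, rfl, hu⟩ := h
  obtain ⟨u', rfl, hu'⟩ := h'
  obtain ⟨t, rfl⟩ :=
    prefix_of_conj_of_length_le hu hu' (ne_nil_of_applyM_ab_ne_applyM_ba hne) hle
  by_contra hlen
  have ht : t ≠ [] := by rintro rfl; simp at hlen
  -- u and u t both conjugate ψ to ξ, so t commutes with every ξ(w)
  have hcomm : ∀ w, applyM ξ w ++ t = t ++ applyM ξ w := fun w =>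
    append_cancel_left (as := u) <| calc
      u ++ (applyM ξ w ++ t) = applyM ψ w ++ (u ++ t) := by rw [← append_assoc, ← hu, append_assoc]
      _ = u ++ (t ++ applyM ξ w) := by rw [hu', append_assoc]
  have hξ : applyM ξ [AB.a, AB.b] = applyM ξ [AB.b, AB.a] :=
    eq_of_append_comm_of_length_eq (hcomm _) (hcomm _) ht (by simp [applyM_pair, add_comm])
  exact hne (append_cancel_right ((hu _).trans (hξ ▸ (hu _).symm)))

theorem index_unique (hne : applyM ψ [AB.a, AB.b] ≠ applyM ψ [AB.b, AB.a])
    (h : IsRightConj ψ ξ k) (h' : IsRightConj ψ ξ k') : k = k' :=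
  (le_total k k').elim (h.eq_of_le hne h') fun hle => (h'.eq_of_le hne h hle).symm

end IsRightConj

structure IsCentralFactorization (ψ : AB → List AB) (z : List AB) (x y : AB) : Prop where
  ne : x ≠ y
  ab : ψ AB.a ++ ψ AB.b = z ++ [x, y]
  ba : ψ AB.b ++ ψ AB.a = z ++ [y, x]
  prefix_append : ∀ c, z <+: ψ c ++ z

theorem IsCentralFactorization.compM_Em {ψ : AB → List AB} {z : List AB} {x y : AB}
    (h : IsCentralFactorization ψ z x y) : IsCentralFactorization (compM ψ Em) z y x where
  ne := h.ne.symm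
  ab := by simpa [compM, Em, applyM] using h.ba
  ba := by simpa [compM, Em, applyM] using h.ab
  prefix_append c := by cases c <;> simpa [compM, Em, applyM] using h.prefix_append _

-- φ turns ψ(ab) = z x y, ψ(ba) = z y x into ψ(a) ψ(ba) = ψ(a) z y x and ψ(a) ψ(ab) = ψ(a) z x y.
theorem IsCentralFactorization.compM_phim {ψ : AB → List AB} {z : List AB} {x y : AB}
    (h : IsCentralFactorization ψ z x y) :
    IsCentralFactorization (compM ψ phim) (ψ AB.a ++ z) y x where
  ne := h.ne.symm
  ab := by simp [compM, phim, applyM, ← h.ba]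
  ba := by simp [compM, phim, applyM, ← h.ab]
  prefix_append c := by
    cases c
    · simpa [compM, phim, applyM] using
        (h.prefix_append AB.b).trans ((prefix_append_right_inj _).mpr (h.prefix_append AB.a))
    · simpa [compM, phim, applyM] using h.prefix_append AB.a

theorem IsStandard.exists_isCentralFactorization {ψ : AB → List AB} (hψ : IsStandard ψ) :
    ∃ z x y, IsCentralFactorization ψ z x y := by
  induction hψ with
  | id => exact ⟨[], AB.a, AB.b, ⟨nofun, rfl, rfl, fun _ => nil_prefix⟩⟩
  | compE _ ih =>
    obtain ⟨z, x, y, h⟩ := ih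
    exact ⟨z, y, x, h.compM_Em⟩
  | compPhi _ ih =>
    obtain ⟨z, x, y, h⟩ := ih
    exact ⟨_, y, x, h.compM_phim⟩

namespace IsCentralFactorization

variable {ψ ξ : AB → List AB} {z : List AB} {x y : AB} {k : ℕ}

theorem length_applyM (h : IsCentralFactorization ψ z x y) :
    (applyM ψ [AB.a, AB.b]).length = z.length + 2 := by
  simp [applyM_pair, h.ab]

theorem applyM_ne (h : IsCentralFactorization ψ z x y) :
    applyM ψ [AB.a, AB.b] ≠ applyM ψ [AB.b, AB.a] := by
  simp [applyM_pair, h.ab, h.ba, h.ne]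

theorem isRightConj_take (h : IsCentralFactorization ψ z x y) (hk : k ≤ z.length) :
    IsRightConj ψ (rightConj ψ (z.take k)) k := by
  simpa [hk] using isRightConj_rightConj fun c => take_prefix_append_take (h.prefix_append c) k

theorem le_of_isRightConj (h : IsCentralFactorization ψ z x y) (hξ : IsRightConj ψ ξ k) :
    k ≤ z.length := by
  obtain ⟨u, rfl, hu⟩ := hξ
  by_contra! hlt
  -- u is a prefix of both ψ(ab) u = z x y u and ψ(ba) u = z y x u
  have hx : z ++ [x] <+: u :=
    prefix_of_prefix_length_le (l₃ := z ++ [x, y] ++ u) ⟨y :: u, by simp⟩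
      (by rw [← h.ab, ← applyM_pair]; exact ⟨_, (hu _).symm⟩) (by simpa using hlt)
  have hy : z ++ [y] <+: u :=
    prefix_of_prefix_length_le (l₃ := z ++ [y, x] ++ u) ⟨x :: u, by simp⟩
      (by rw [← h.ba, ← applyM_pair]; exact ⟨_, (hu _).symm⟩) (by simpa using hlt)
  exact h.ne (by simpa using (prefix_of_prefix_length_le hx hy (by simp)).eq_of_length (by simp))

end IsCentralFactorization

/-- A standard morphism ψ has exactly |ψ(ab)| − 1 distinct right
conjugates, namely ψ₀, …, ψ_{|ψ(ab)|−2}: a k-th right conjugate exists for each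
0 ≤ k ≤ |ψ(ab)| − 2, right conjugates at distinct such indices are distinct, every
right conjugate of ψ occurs at some index 0 ≤ k ≤ |ψ(ab)| − 2, and the set of all
right conjugates of ψ has exactly |ψ(ab)| − 1 elements. -/
theorem statement17 (ψ : AB → List AB) (hψ : IsStandard ψ) :
    (∀ k, k ≤ (applyM ψ [AB.a, AB.b]).length - 2 → ∃ ξ, IsRightConj ψ ξ k) ∧
    (∀ k k' : ℕ, ∀ ξ ξ' : AB → List AB,
      k ≤ (applyM ψ [AB.a, AB.b]).length - 2 →
      k' ≤ (applyM ψ [AB.a, AB.b]).length - 2 →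
      IsRightConj ψ ξ k → IsRightConj ψ ξ' k' → ξ = ξ' → k = k') ∧
    (∀ ξ : AB → List AB, ∀ k : ℕ, IsRightConj ψ ξ k →
      ∃ k', k' ≤ (applyM ψ [AB.a, AB.b]).length - 2 ∧ IsRightConj ψ ξ k') ∧
    {ξ : AB → List AB | ∃ k, IsRightConj ψ ξ k}.ncard =
      (applyM ψ [AB.a, AB.b]).length - 1 := by
  obtain ⟨z, x, y, h⟩ := hψ.exists_isCentralFactorization
  have hne := h.applyM_ne
  have hlen : (applyM ψ [AB.a, AB.b]).length - 2 = z.length := by simp [h.length_applyM]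
  have hconj : {ξ | ∃ k, IsRightConj ψ ξ k} =
      (fun k => rightConj ψ (z.take k)) '' ↑(Finset.range (z.length + 1)) := by
    ext ξ
    constructor
    · rintro ⟨k, hξ⟩
      have hk := h.le_of_isRightConj hξ
      exact ⟨k, by simpa [Nat.lt_succ_iff] using hk,
        (h.isRightConj_take hk).unique (ne_nil_of_applyM_ab_ne_applyM_ba hne) hξ⟩
    · rintro ⟨k, hk, rfl⟩
      exact ⟨k, h.isRightConj_take (by simpa [Nat.lt_succ_iff] using hk)⟩
  refine ⟨fun k hk => ⟨_, h.isRightConj_take (hlen ▸ hk)⟩,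
    fun k k' ξ ξ' _ _ hξ hξ' heq => hξ.index_unique hne (heq ▸ hξ'),
    fun ξ k hξ => ⟨k, hlen ▸ h.le_of_isRightConj hξ, hξ⟩, ?_⟩
  have hinj : Set.InjOn (fun k => rightConj ψ (z.take k)) ↑(Finset.range (z.length + 1)) := by
    intro k hk k' hk' (heq : rightConj ψ (z.take k) = rightConj ψ (z.take k'))
    simp only [Finset.coe_range, Set.mem_Iio, Nat.lt_succ_iff] at hk hk'
    exact (h.isRightConj_take hk).index_unique hne (heq ▸ h.isRightConj_take hk')
  rw [hconj, hinj.ncard_image, Set.ncard_coe_finset, Finset.card_range, h.length_applyM]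
  rfl
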